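/- arXiv:1602.08365 — 3 statements merged into one kernel-verified Lean document; each statement's English description precedes it below -/
import Mathlib

section
/- Let 𝐦 = (m_0,…,m_r) and 𝐧 = (n_0,…,n_r) be strictly increasing (r+1)-tuples of nonnegative integers. Then S_{𝐦,𝐧} is a vector space of dimension dim(S_{𝐦,𝐧}) = Σ_{k=0}^r (m_k − m_{k−1})·(n_{r−k} + 1), where m_{−1} := −1. -/
open scoped BigOperators

noncomputable section

/-- Sup norm `‖f‖_{∞,S}` of a function over a set `S`. -/
def supN {α : Type*} (S : Set α) (f : α → ℝ) : ℝ := ⨆ z : S, |f z.1|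

/-- Operator norm of `L` over continuous functions on `R` with sup norm `≤ 1`. -/
def opN {α : Type*} [TopologicalSpace α] (R : Set α) (L : (α → ℝ) → α → ℝ) : ℝ :=
  ⨆ G : {G : α → ℝ // ContinuousOn G R ∧ supN R G ≤ 1}, supN R (L G.1)

/-- Bernstein basis function `B_i^m` scaled to `[a,b]`. -/
def bern (m : ℕ) (a b : ℝ) (i : ℕ) : ℝ → ℝ := fun x =>
  (m.choose i : ℝ) * ((b - x) / (b - a)) ^ (m - i) * ((x - a) / (b - a)) ^ i

/-- Uniform node `x_i^m = a + (i/m)(b-a)`. -/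
def node (m : ℕ) (a b : ℝ) (i : ℕ) : ℝ := a + (i : ℝ) / (m : ℝ) * (b - a)

/-- Bernstein collocation matrix `T_m = (B_j^m(x_i^m))_{ij}`. -/
def Tmat (m : ℕ) (a b : ℝ) : Matrix (Fin (m + 1)) (Fin (m + 1)) ℝ := fun i j =>
  bern m a b j (node m a b i)

/-- Dual functionals `λ_j^m f = (T_m⁻¹ · (f(x_i^m))_i)_j`. -/
def lam (m : ℕ) (a b : ℝ) (j : Fin (m + 1)) (f : ℝ → ℝ) : ℝ :=
  (Tmat m a b)⁻¹.mulVec (fun i => f (node m a b i)) j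

/-- `λ_j^m` with a natural-number index (zero out of range). -/
def lamN (m : ℕ) (a b : ℝ) (j : ℕ) (f : ℝ → ℝ) : ℝ :=
  if h : j < m + 1 then lam m a b ⟨j, h⟩ f else 0

/-- The index map `α^k : i ↦ i·(m_r/m_k)` (when `m_k ∣ m_r` and `i ≤ m_k` the `min` is inert). -/
def alphaF (mk mr : ℕ) (i : Fin (mk + 1)) : Fin (mr + 1) :=
  ⟨min (i.1 * (mr / mk)) mr, Nat.lt_succ_of_le (min_le_right _ _)⟩

/-- Degree elevation matrix `E_{m_k}^{m_r} = (λ_i^{m_r}(B_j^{m_k}))_{ij}`. -/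
def Emat (mk mr : ℕ) (a b : ℝ) : Matrix (Fin (mr + 1)) (Fin (mk + 1)) ℝ := fun i j =>
  lam mr a b i (bern mk a b j)

/-- Row submatrix `E_{m_k}^{m_r}(α^k,:)`. -/
def Esub (mk mr : ℕ) (a b : ℝ) : Matrix (Fin (mk + 1)) (Fin (mk + 1)) ℝ := fun i j =>
  Emat mk mr a b (alphaF mk mr i) j

/-- Dual basis polynomials `D_j^{m_k} = Σ_ℓ (E(α^k,:)⁻¹)_{ℓ j} B_ℓ^{m_k}`. -/
def Dq (mk mr : ℕ) (a b : ℝ) (j : Fin (mk + 1)) : ℝ → ℝ := fun x =>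
  ∑ l : Fin (mk + 1), (Esub mk mr a b)⁻¹ l j * bern mk a b l x

/-- `D_j^{m_k}` with a natural-number index (zero out of range). -/
def DqN (mk mr : ℕ) (a b : ℝ) (j : ℕ) : ℝ → ℝ :=
  if h : j < mk + 1 then Dq mk mr a b ⟨j, h⟩ else 0

/-- Functionals `μ_i^{m_k} = λ_{α^k_i}^{m_r}`. -/
def mu (mk mr : ℕ) (a b : ℝ) (i : Fin (mk + 1)) (f : ℝ → ℝ) : ℝ :=
  lam mr a b (alphaF mk mr i) f

/-- Univariate quasi-interpolant `P_{m_k} f = Σ_i (μ_i^{m_k} f)·D_i^{m_k}`. -/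
def Pop (mk mr : ℕ) (a b : ℝ) (f : ℝ → ℝ) : ℝ → ℝ := fun x =>
  ∑ i : Fin (mk + 1), mu mk mr a b i f * Dq mk mr a b i x

/-- Bivariate extension `𝐏_{m_k} = P_{m_k} × I` (acting in the first variable). -/
def PP (mk mr : ℕ) (a b : ℝ) (F : ℝ × ℝ → ℝ) : ℝ × ℝ → ℝ := fun z =>
  Pop mk mr a b (fun x => F (x, z.2)) z.1

/-- Bivariate extension `𝐐_{n_ℓ} = I × Q_{n_ℓ}` (acting in the second variable). -/
def QQ (nl nr : ℕ) (c d : ℝ) (F : ℝ × ℝ → ℝ) : ℝ × ℝ → ℝ := fun z =>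
  Pop nl nr c d (fun y => F (z.1, y)) z.2

/-- Maximum absolute row sum matrix norm. -/
def rowNorm {p q : ℕ} (A : Matrix (Fin p) (Fin q) ℝ) : ℝ := ⨆ i : Fin p, ∑ j, |A i j|

/-- `C_{m_r} = max_i sup{ |λ_i^{m_r} f| : f ∈ C[a,b], ‖f‖_∞ ≤ 1 }`. -/
def Cbase (mr : ℕ) (a b : ℝ) : ℝ :=
  ⨆ i : Fin (mr + 1),
    ⨆ f : {f : ℝ → ℝ // ContinuousOn f (Set.Icc a b) ∧ supN (Set.Icc a b) f ≤ 1},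
      |lam mr a b i f.1|

/-- `C_{m_r,m_k} = C_{m_r}·(m_k+1)·‖E_{m_k}^{m_r}(α^k,:)⁻¹‖_∞`. -/
def Cconst (mk mr : ℕ) (a b : ℝ) : ℝ :=
  Cbase mr a b * ((mk : ℝ) + 1) * rowNorm (Esub mk mr a b)⁻¹

/-- `Π_m`: univariate polynomial functions of degree at most `m`. -/
def polyF (m : ℕ) : Submodule ℝ (ℝ → ℝ) :=
  Submodule.span ℝ {f : ℝ → ℝ | ∃ i ≤ m, f = fun x => x ^ i}

/-- `Π_p ⊗ Π_q`: bivariate polynomial functions of degree `≤ p` in `x` and `≤ q` in `y`. -/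
def polyF2 (p q : ℕ) : Submodule ℝ (ℝ × ℝ → ℝ) :=
  Submodule.span ℝ {F : ℝ × ℝ → ℝ | ∃ i ≤ p, ∃ j ≤ q, F = fun z => z.1 ^ i * z.2 ^ j}

/-- `S_{𝐦,𝐧} = Σ_{k=0}^r Π_{m_k} ⊗ Π_{n_{r-k}}` (as a space of functions). -/
def SmnF (r : ℕ) (m n : ℕ → ℕ) : Submodule ℝ (ℝ × ℝ → ℝ) :=
  ∑ k ∈ Finset.range (r + 1), polyF2 (m k) (n (r - k))

/-- `Π_p ⊗ Π_q` inside the bivariate polynomial ring. -/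
def PiTP (p q : ℕ) : Submodule ℝ (MvPolynomial (Fin 2) ℝ) :=
  Submodule.span ℝ {P | ∃ i ≤ p, ∃ j ≤ q,
    P = MvPolynomial.monomial (Finsupp.single 0 i + Finsupp.single 1 j) (1 : ℝ)}

/-- `S_{𝐦,𝐧} = Σ_{k=0}^r Π_{m_k} ⊗ Π_{n_{r-k}}` in the bivariate polynomial ring. -/
def SmnP (r : ℕ) (m n : ℕ → ℕ) : Submodule ℝ (MvPolynomial (Fin 2) ℝ) :=
  ∑ k ∈ Finset.range (r + 1), PiTP (m k) (n (r - k))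

/-- The rectangle `[a,b] × [c,d]`. -/
def Rect (a b c d : ℝ) : Set (ℝ × ℝ) := Set.Icc a b ×ˢ Set.Icc c d

/-- `Fd` is a system of mixed partial derivatives of `Fd 0 0` of class `C^{p,q}` on the
rectangle: all mixed partials `F^{(i,j)}`, `i ≤ p`, `j ≤ q`, exist and are continuous. -/
def IsCpq (p q : ℕ) (a b c d : ℝ) (Fd : ℕ → ℕ → ℝ × ℝ → ℝ) : Prop :=
  (∀ i < p, ∀ j ≤ q, ∀ z ∈ Rect a b c d,
      HasDerivWithinAt (fun x => Fd i j (x, z.2)) (Fd (i + 1) j z) (Set.Icc a b) z.1) ∧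
  (∀ i ≤ p, ∀ j < q, ∀ z ∈ Rect a b c d,
      HasDerivWithinAt (fun y => Fd i j (z.1, y)) (Fd i (j + 1) z) (Set.Icc c d) z.2) ∧
  (∀ i ≤ p, ∀ j ≤ q, ContinuousOn (Fd i j) (Rect a b c d))

end

/-!
`S_{𝐦,𝐧}` is spanned by the monomials `x^i y^j` whose exponents lie in the staircase
`⋃_k [0, m_k] × [0, n_{r-k}]`, and distinct monomials are linearly independent, so the dimension
is the number of lattice points of the staircase. Sorting the columns `i` by the block
`m_{k-1} < i ≤ m_k` containing them, monotonicity of `𝐧` makes every column of block `k` have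
height `n_{r-k} + 1`, while monotonicity of `𝐦` makes the blocks disjoint.
-/

open Finset

section Staircase

/-- `{i | m_{k-1} < i ≤ m_k}` with the convention `m_{-1} = -1`. -/
def block (m : ℕ → ℕ) (k : ℕ) : Finset ℕ :=
  if k = 0 then range (m 0 + 1) else Ioc (m (k - 1)) (m k)

lemma card_block (m : ℕ → ℕ) (k : ℕ) :
    #(block m k) = if k = 0 then m 0 + 1 else m k - m (k - 1) := by
  unfold block; split_ifs <;> simp

lemma le_of_mem_block {m : ℕ → ℕ} {k i : ℕ} (hi : i ∈ block m k) : i ≤ m k := by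
  unfold block at hi
  split_ifs at hi with hk
  · subst hk; simpa [Nat.lt_succ_iff] using hi
  · exact (mem_Ioc.mp hi).2

lemma lt_of_mem_block {m : ℕ → ℕ} {k i : ℕ} (hk : k ≠ 0) (hi : i ∈ block m k) :
    m (k - 1) < i := by
  simp only [block, hk, if_false, mem_Ioc] at hi
  exact hi.1

/-- The witness is the first `t` with `i ≤ m t`. -/
lemma exists_mem_block {m : ℕ → ℕ} {k i : ℕ} (hi : i ≤ m k) : ∃ t ≤ k, i ∈ block m t := by
  classical
  have hex : ∃ t, i ≤ m t := ⟨k, hi⟩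
  refine ⟨Nat.find hex, Nat.find_min' hex hi, ?_⟩
  unfold block
  split_ifs with h0
  · simpa [h0, Nat.lt_succ_iff] using Nat.find_spec hex
  · exact mem_Ioc.mpr ⟨not_le.mp (Nat.find_min hex (by omega)), Nat.find_spec hex⟩

lemma disjoint_block {r : ℕ} {m : ℕ → ℕ} (hm : MonotoneOn m (Set.Iic r)) {k k' : ℕ}
    (hkk' : k < k') (hk' : k' ≤ r) : Disjoint (block m k) (block m k') := by
  refine disjoint_left.mpr fun i hik hik' => ?_
  have : m k ≤ m (k' - 1) := hm (by simp; omega) (by simp; omega) (by omega)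
  have := lt_of_mem_block (by omega) hik'
  have := le_of_mem_block hik
  omega

def staircase (r : ℕ) (m n : ℕ → ℕ) : Finset (ℕ × ℕ) :=
  (range (r + 1)).biUnion fun k => range (m k + 1) ×ˢ range (n (r - k) + 1)

lemma staircase_eq_biUnion_block {r : ℕ} {m n : ℕ → ℕ} (hn : MonotoneOn n (Set.Iic r)) :
    staircase r m n = (range (r + 1)).biUnion fun k => block m k ×ˢ range (n (r - k) + 1) := by
  ext ⟨i, j⟩
  simp only [staircase, mem_biUnion, mem_product, mem_range, Nat.lt_succ_iff]
  constructor
  · rintro ⟨k, hk, hi, hj⟩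
    obtain ⟨t, htk, ht⟩ := exists_mem_block hi
    exact ⟨t, by omega, ht, hj.trans (hn (by simp) (by simp) (by omega))⟩
  · rintro ⟨k, hk, hi, hj⟩
    exact ⟨k, hk, le_of_mem_block hi, hj⟩

lemma card_staircase {r : ℕ} {m n : ℕ → ℕ} (hm : MonotoneOn m (Set.Iic r))
    (hn : MonotoneOn n (Set.Iic r)) :
    #(staircase r m n) = ∑ k ∈ range (r + 1),
      (if k = 0 then m 0 + 1 else m k - m (k - 1)) * (n (r - k) + 1) := by
  rw [staircase_eq_biUnion_block hn, card_biUnion]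
  · simp only [card_product, card_range, card_block]
  intro k hk k' hk' hne
  simp only [coe_range, Set.mem_Iio] at hk hk'
  refine disjoint_product.mpr (Or.inl ?_)
  rcases Nat.lt_or_gt_of_ne hne with h | h
  · exact disjoint_block hm h (by omega)
  · exact (disjoint_block hm h (by omega)).symm

end Staircase

lemma monotoneOn_Iic_of_le_succ {α : Type*} [Preorder α] {f : ℕ → α} {r : ℕ}
    (hf : ∀ k < r, f k ≤ f (k + 1)) : MonotoneOn f (Set.Iic r) :=
  monotoneOn_of_le_succ Set.ordConnected_Iic fun k _ _ hk => hf k (Nat.succ_le_iff.mp hk)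

lemma Submodule.sum_span_eq_span_biUnion {R M ι : Type*} [Semiring R] [AddCommMonoid M]
    [Module R M] (s : Finset ι) (A : ι → Set M) :
    ∑ k ∈ s, span R (A k) = span R (⋃ k ∈ s, A k) := by
  classical
  induction s using Finset.induction_on with
  | empty => simp
  | insert _ _ ha ih =>
    rw [sum_insert ha, ih, add_eq_sup, ← span_union, set_biUnion_insert]

section Monomials

open MvPolynomial Submodule

variable (R : Type*) [CommSemiring R]

noncomputable def monomialXY (e : ℕ × ℕ) : MvPolynomial (Fin 2) R :=
  monomial (Finsupp.single 0 e.1 + Finsupp.single 1 e.2) 1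

lemma linearIndependent_monomialXY : LinearIndependent R (monomialXY R) := by
  unfold monomialXY
  have hinj : Function.Injective
      fun e : ℕ × ℕ => Finsupp.single (0 : Fin 2) e.1 + Finsupp.single 1 e.2 := fun e e' h =>
    Prod.ext (by simpa using DFunLike.congr_fun h 0) (by simpa using DFunLike.congr_fun h 1)
  simpa [Function.comp_def, coe_basisMonomials] using
    (basisMonomials (Fin 2) R).linearIndependent.comp _ hinj

lemma finrank_span_monomialXY [Nontrivial R] [StrongRankCondition R] (s : Finset (ℕ × ℕ)) :
    Module.finrank R (span R (monomialXY R '' s)) = #s := by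
  rw [Set.image_eq_range]
  exact (finrank_span_eq_card ((linearIndependent_monomialXY R).comp _ Subtype.val_injective)).trans
    (Fintype.card_coe s)

end Monomials

lemma PiTP_eq_span (p q : ℕ) :
    PiTP p q = Submodule.span ℝ (monomialXY ℝ '' ↑(range (p + 1) ×ˢ range (q + 1))) := by
  unfold PiTP
  congr 1
  ext P
  simp only [monomialXY, Set.mem_ofPred_eq, Set.mem_image, coe_product, coe_range,
    Set.mem_prod, Set.mem_Iio, Nat.lt_succ_iff, Prod.exists]
  constructor
  · rintro ⟨i, hi, j, hj, rfl⟩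
    exact ⟨i, j, ⟨hi, hj⟩, rfl⟩
  · rintro ⟨i, j, ⟨hi, hj⟩, rfl⟩
    exact ⟨i, hi, j, hj, rfl⟩

lemma SmnP_eq_span (r : ℕ) (m n : ℕ → ℕ) :
    SmnP r m n = Submodule.span ℝ (monomialXY ℝ '' staircase r m n) := by
  simp only [SmnP, PiTP_eq_span, Submodule.sum_span_eq_span_biUnion, staircase, coe_biUnion,
    Set.image_iUnion₂, mem_coe]

/-- Dimension of `S_{𝐦,𝐧}` for strictly increasing `𝐦, 𝐧`:
`dim S_{𝐦,𝐧} = Σ_{k=0}^r (m_k − m_{k−1})(n_{r−k}+1)` with `m_{−1} := −1`. -/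
theorem stmt1 (r : ℕ) (m n : ℕ → ℕ)
    (hm : ∀ k < r, m k < m (k + 1)) (hn : ∀ k < r, n k < n (k + 1)) :
    Module.finrank ℝ ↥(SmnP r m n) =
      ∑ k ∈ Finset.range (r + 1),
        (if k = 0 then m 0 + 1 else m k - m (k - 1)) * (n (r - k) + 1) := by
  rw [SmnP_eq_span, finrank_span_monomialXY]
  exact card_staircase (monotoneOn_Iic_of_le_succ fun k hk => (hm k hk).le)
    (monotoneOn_Iic_of_le_succ fun k hk => (hn k hk).le)
end

section
/- For all 0 ≤ ℓ ≤ k ≤ r, the quasi-interpolation operators satisfy P_{m_k} P_{m_ℓ} = P_{m_ℓ} = P_{m_ℓ} P_{m_k} (as operators on C[a,b], where the composition is well-defined since each P maps into polynomials, which are continuous), and likewise Q_{n_k} Q_{n_ℓ} = Q_{n_ℓ} = Q_{n_ℓ} Q_{n_k} on C[c,d]. -/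
open scoped BigOperators

/-!
Once `E_{m_k}^{m_r}(α^k,:)` is invertible, the functionals `μ_i^{m_k}` and the polynomials
`D_j^{m_k}` are biorthogonal, so `P_{m_k}` fixes the Bernstein polynomials of degree `m_k`, hence
(by degree elevation) all of `Π_{m_ℓ} ⊆ Π_{m_k}`, which contains the range of `P_{m_ℓ}`. Conversely
`α^ℓ_i = α^k_{i m_k / m_ℓ}`, so every `μ_i^{m_ℓ}` is one of the `μ^{m_k}`, and these do not see the
difference between `f` and `P_{m_k} f`.

Invertibility: by degree elevation, with `q = m_r / m_k` and `N = m_r - m_k`, the matrix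
`E_{m_k}^{m_r}(α^k,:)` has entries `C(m_k, j) C(N, iq - j) / C(m_r, iq)`. Up to diagonal factors
it is the minor, on rows `iq`, of the Toeplitz matrix of the coefficients of `(1 + x)^N`. Writing
`(1 + x)^{N+1} = (1 + x)^N + x (1 + x)^N` row by row expands such a minor into a sum of minors of
exponent `N`, which by induction on `N` are nonnegative, and at least `1` when the selected rows
`R 0 < R 1 < ⋯` satisfy `i ≤ R i ≤ i + N`.
-/

section PascalMinor

variable {p : ℕ}

noncomputable def intChoose (N : ℕ) (k : ℤ) : ℝ := if 0 ≤ k then (N.choose k.toNat : ℝ) else 0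

lemma intChoose_zero_left (k : ℤ) : intChoose 0 k = if k = 0 then 1 else 0 := by
  unfold intChoose
  split_ifs <;> simp_all [Nat.choose_eq_zero_iff]; omega

lemma intChoose_natCast (N n : ℕ) : intChoose N n = N.choose n := by
  simp [intChoose]

lemma intChoose_succ (N : ℕ) (k : ℤ) :
    intChoose (N + 1) k = intChoose N k + intChoose N (k - 1) := by
  obtain hk | rfl | hk := lt_trichotomy k 0
  · simp only [intChoose, if_neg hk.not_ge, if_neg (show ¬ (0 : ℤ) ≤ k - 1 by omega), add_zero]
  · simp [intChoose]
  · obtain ⟨n, rfl⟩ : ∃ n : ℕ, k = n + 1 := ⟨(k - 1).toNat, by omega⟩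
    rw [add_sub_cancel_right, ← Nat.cast_succ, intChoose_natCast, intChoose_natCast,
      intChoose_natCast, Nat.choose_succ_succ', Nat.cast_add, add_comm]

lemma StrictMono.monotone_sub_val {R : Fin p → ℤ} (hR : StrictMono R) :
    Monotone fun i => R i - i := by
  cases p with
  | zero => exact fun i => i.elim0
  | succ n =>
    refine Fin.monotone_iff_le_succ.2 fun i => ?_
    have := Fin.strictMono_iff_lt_succ.1 hR i
    simp only [Fin.val_castSucc, Fin.val_succ, Nat.cast_add, Nat.cast_one]
    omega

noncomputable def pascalMinor (N : ℕ) (R : Fin p → ℤ) : Matrix (Fin p) (Fin p) ℝ :=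
  Matrix.of fun i j => intChoose N (R i - j)

lemma det_pascalMinor_succ (N : ℕ) (R : Fin p → ℤ) :
    (pascalMinor (N + 1) R).det =
      ∑ T : Finset (Fin p), (pascalMinor N fun i => if i ∈ T then R i - 1 else R i).det := by
  classical
  have hsplit : pascalMinor (N + 1) R = pascalMinor N (R - 1) + pascalMinor N R := by
    ext i j
    simp [pascalMinor, intChoose_succ, add_comm, sub_right_comm]
  rw [hsplit]
  refine (Matrix.detRowAlternating.map_add_univ (pascalMinor N (R - 1)) (pascalMinor N R)).trans
    (Finset.sum_congr rfl fun T _ => congrArg _ ?_)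
  ext i j
  by_cases hi : i ∈ T <;> simp [hi, pascalMinor, Finset.piecewise]

lemma det_pascalMinor_eq_zero {N : ℕ} {R : Fin p → ℤ} (hR : ¬ Function.Injective R) :
    (pascalMinor N R).det = 0 := by
  obtain ⟨i, j, hij, hne⟩ := Function.not_injective_iff.1 hR
  exact Matrix.det_zero_of_row_eq hne (funext fun k => by simp [pascalMinor, hij])

lemma StrictMono.monotone_ite_sub_one {R : Fin p → ℤ} (hR : StrictMono R) (T : Finset (Fin p)) :
    Monotone fun i => if i ∈ T then R i - 1 else R i := by
  intro i j hij
  obtain rfl | hlt := hij.eq_or_lt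
  · rfl
  · have := hR hlt
    dsimp only
    split_ifs <;> omega

lemma pascalMinor_zero_of_forall_eq {R : Fin p → ℤ} (hR : ∀ i, R i = i) : pascalMinor 0 R = 1 := by
  ext i j
  simp [pascalMinor, intChoose_zero_left, hR, Matrix.one_apply, sub_eq_zero, Fin.ext_iff]

lemma det_pascalMinor_zero_nonneg {R : Fin p → ℤ} (hR : StrictMono R) :
    0 ≤ (pascalMinor 0 R).det := by
  by_cases hid : ∀ i, R i = i
  · simp [pascalMinor_zero_of_forall_eq hid]
  obtain ⟨i₀, hi₀⟩ := not_forall.1 hid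
  suffices ∃ i, ∀ j : Fin p, R i - j ≠ 0 by
    obtain ⟨i, hi⟩ := this
    exact (Matrix.det_eq_zero_of_row_eq_zero i fun j => by
      simp [pascalMinor, intChoose_zero_left, hi j]).ge
  have hp : 0 < p := i₀.pos
  rcases lt_or_gt_of_ne hi₀ with hlt | hgt
  · refine ⟨⟨0, hp⟩, fun j => ?_⟩
    have := hR.monotone_sub_val (show (⟨0, hp⟩ : Fin p) ≤ i₀ from Nat.zero_le _)
    simp only [Nat.cast_zero, sub_zero] at this
    omega
  · refine ⟨⟨p - 1, by omega⟩, fun j => ?_⟩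
    have := hR.monotone_sub_val (show i₀ ≤ ⟨p - 1, by omega⟩ from Nat.le_pred_of_lt i₀.2)
    dsimp only at this
    have := j.2
    omega

lemma det_pascalMinor_nonneg (N : ℕ) {R : Fin p → ℤ} (hR : Monotone R) :
    0 ≤ (pascalMinor N R).det := by
  by_cases hinj : Function.Injective R
  swap
  · exact (det_pascalMinor_eq_zero hinj).ge
  induction N generalizing R with
  | zero => exact det_pascalMinor_zero_nonneg (hR.strictMono_of_injective hinj)
  | succ N ih =>
    rw [det_pascalMinor_succ]
    refine Finset.sum_nonneg fun T _ => ?_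
    by_cases hinj' : Function.Injective fun i => if i ∈ T then R i - 1 else R i
    · exact ih ((hR.strictMono_of_injective hinj).monotone_ite_sub_one T) hinj'
    · exact (det_pascalMinor_eq_zero hinj').ge

lemma one_le_det_pascalMinor (N : ℕ) {R : Fin p → ℤ} (hR : StrictMono R)
    (hdiag : ∀ i : Fin p, ((i : ℕ) : ℤ) ≤ R i ∧ R i ≤ i + N) : 1 ≤ (pascalMinor N R).det := by
  classical
  induction N generalizing R with
  | zero =>
    have hid : ∀ i, R i = i := fun i => le_antisymm (by simpa using (hdiag i).2) (hdiag i).1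
    simp [pascalMinor_zero_of_forall_eq hid]
  | succ N ih =>
    -- shifting exactly the rows on the upper edge of the band keeps `R` strictly increasing
    set T₀ := Finset.univ.filter fun i => R i = i + (N + 1)
    have hR₀ : StrictMono fun i => if i ∈ T₀ then R i - 1 else R i := by
      intro i j hij
      have := hR hij
      have := hdiag i
      have := hdiag j
      have : (i : ℤ) < j := by exact_mod_cast hij
      simp only [T₀, Finset.mem_filter, Finset.mem_univ, true_and]
      push_cast at *
      split_ifs <;> omega
    rw [det_pascalMinor_succ]
    refine (ih hR₀ fun i => ?_).trans (Finset.single_le_sum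
      (f := fun T => (pascalMinor N fun i => if i ∈ T then R i - 1 else R i).det)
      (fun T _ => det_pascalMinor_nonneg N (hR.monotone_ite_sub_one T)) (Finset.mem_univ T₀))
    · have := hdiag i
      simp only [T₀, Finset.mem_filter, Finset.mem_univ, true_and]
      push_cast at *
      split_ifs <;> omega

end PascalMinor

section Bernstein

open Polynomial

variable {a b : ℝ}

lemma bern_eq_eval (hab : a ≠ b) (m i : ℕ) (x : ℝ) :
    bern m a b i x = (bernsteinPolynomial ℝ m i).eval ((x - a) / (b - a)) := by
  have hba : b - a ≠ 0 := sub_ne_zero.2 hab.symm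
  have : 1 - (x - a) / (b - a) = (b - x) / (b - a) := by field_simp; ring
  simp [bern, bernsteinPolynomial, this]
  ring

lemma node_sub_div (hab : a ≠ b) (m i : ℕ) : (node m a b i - a) / (b - a) = i / m := by
  rw [node, add_sub_cancel_left, mul_div_assoc, div_self (sub_ne_zero.2 hab.symm), mul_one]

lemma natDegree_bernsteinPolynomial_le (m ν : ℕ) :
    (bernsteinPolynomial ℝ m ν).natDegree ≤ m := by
  rcases le_or_gt ν m with h | h
  · unfold bernsteinPolynomial
    compute_degree
    omega
  · simp [bernsteinPolynomial.eq_zero_of_lt ℝ h]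

lemma coeff_bernsteinPolynomial_of_lt {m ν k : ℕ} (h : k < ν) :
    (bernsteinPolynomial ℝ m ν).coeff k = 0 := by
  rw [bernsteinPolynomial, mul_right_comm, coeff_mul_X_pow', if_neg (by omega)]

lemma coeff_bernsteinPolynomial_self (m ν : ℕ) :
    (bernsteinPolynomial ℝ m ν).coeff ν = m.choose ν := by
  rw [bernsteinPolynomial, mul_right_comm, coeff_mul_X_pow', if_pos le_rfl, Nat.sub_self,
    coeff_zero_eq_eval_zero]
  simp

lemma Tmat_eq_vandermonde_mul (hab : a ≠ b) (m : ℕ) :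
    Tmat m a b = Matrix.vandermonde (fun i : Fin (m + 1) => (i : ℝ) / m) *
      Matrix.of fun k j : Fin (m + 1) => (bernsteinPolynomial ℝ m j).coeff k := by
  ext i j
  rw [Tmat, bern_eq_eval hab, node_sub_div hab, Matrix.mul_apply,
    eval_eq_sum_range' (Nat.lt_succ_of_le (natDegree_bernsteinPolynomial_le m j)),
    ← Fin.sum_univ_eq_sum_range]
  simp [mul_comm]

lemma det_Tmat_ne_zero (hab : a ≠ b) (m : ℕ) : (Tmat m a b).det ≠ 0 := by
  have hinj : Function.Injective fun i : Fin (m + 1) => (i : ℝ) / m := by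
    rcases eq_or_ne m 0 with rfl | hm
    · exact fun i j _ => Fin.ext (by omega)
    · intro i j hij
      exact Fin.ext (by exact_mod_cast (div_left_inj' (Nat.cast_ne_zero.2 hm)).1 hij)
  have htri : (Matrix.of fun k j : Fin (m + 1) =>
      (bernsteinPolynomial ℝ m j).coeff k).IsLowerTriangular :=
    fun k j hjk => coeff_bernsteinPolynomial_of_lt hjk
  rw [Tmat_eq_vandermonde_mul hab, Matrix.det_mul, Matrix.det_of_isLowerTriangular _ htri]
  refine mul_ne_zero (Matrix.det_vandermonde_ne_zero_iff.2 hinj)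
    (Finset.prod_ne_zero_iff.2 fun j _ => ?_)
  simp [coeff_bernsteinPolynomial_self, (Nat.choose_pos (Nat.lt_succ_iff.1 j.2)).ne']

end Bernstein

section DualFunctionals

open Polynomial

variable {a b : ℝ}

lemma lam_sum {ι : Type*} {m : ℕ} (t : Fin (m + 1)) (S : Finset ι) (c : ι → ℝ)
    (g : ι → ℝ → ℝ) :
    lam m a b t (fun x => ∑ l ∈ S, c l * g l x) = ∑ l ∈ S, c l * lam m a b t (g l) := by
  simp only [lam, Matrix.mulVec, dotProduct, Finset.mul_sum]
  rw [Finset.sum_comm]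
  exact Finset.sum_congr rfl fun l _ => Finset.sum_congr rfl fun i _ => by ring

lemma lam_bern (hab : a ≠ b) (m : ℕ) (t s : Fin (m + 1)) :
    lam m a b t (bern m a b s) = (1 : Matrix (Fin (m + 1)) (Fin (m + 1)) ℝ) t s := by
  rw [← Matrix.nonsing_inv_mul _ (isUnit_iff_ne_zero.2 (det_Tmat_ne_zero hab m)), Matrix.mul_apply]
  rfl

lemma lam_sum_bern (hab : a ≠ b) (m : ℕ) (c : Fin (m + 1) → ℝ) (t : Fin (m + 1)) :
    lam m a b t (fun x => ∑ s : Fin (m + 1), c s * bern m a b s x) = c t := by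
  simp [lam_sum, lam_bern hab, Matrix.one_apply]

noncomputable def elevCoeff (mk M t j : ℕ) : ℝ :=
  mk.choose j * intChoose (M - mk) ((t : ℤ) - j) / M.choose t

lemma bernsteinPolynomial_eval_eq_sum_elevCoeff {mk M j : ℕ} (hkM : mk ≤ M) (hj : j ≤ mk)
    (s : ℝ) : (bernsteinPolynomial ℝ mk j).eval s =
      ∑ t ∈ Finset.range (M + 1), elevCoeff mk M t j * (bernsteinPolynomial ℝ M t).eval s := by
  set N := M - mk
  have hterm : ∀ t ∈ Finset.range (M + 1), elevCoeff mk M t j * (bernsteinPolynomial ℝ M t).eval s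
      = mk.choose j * (intChoose N ((t : ℤ) - j) * s ^ t * (1 - s) ^ (M - t)) := by
    intro t ht
    have : (M.choose t : ℝ) ≠ 0 := by
      exact_mod_cast (Nat.choose_pos (Nat.lt_succ_iff.1 (Finset.mem_range.1 ht))).ne'
    simp only [elevCoeff, bernsteinPolynomial, eval_mul, eval_natCast, eval_pow, eval_X,
      eval_sub, eval_one]
    field_simp
    ring
  rw [Finset.sum_congr rfl hterm, ← Finset.mul_sum,
    show M + 1 = j + (N + 1 + (mk - j)) by omega, Finset.sum_range_add, Finset.sum_range_add]
  have hlow : ∀ t ∈ Finset.range j, intChoose N ((t : ℤ) - j) * s ^ t * (1 - s) ^ (M - t) = 0 :=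
    fun t ht => by
      rw [intChoose, if_neg (by simp at ht; omega), zero_mul, zero_mul]
  have hhigh : ∀ u ∈ Finset.range (mk - j), intChoose N (((j + (N + 1 + u) : ℕ) : ℤ) - j) *
      s ^ (j + (N + 1 + u)) * (1 - s) ^ (M - (j + (N + 1 + u))) = 0 := fun u _ => by
    rw [Nat.cast_add, add_sub_cancel_left, intChoose_natCast,
      Nat.choose_eq_zero_of_lt (by omega), Nat.cast_zero, zero_mul, zero_mul]
  have hmid : ∀ u ∈ Finset.range (N + 1), intChoose N (((j + u : ℕ) : ℤ) - j) *
      s ^ (j + u) * (1 - s) ^ (M - (j + u))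
      = s ^ j * (1 - s) ^ (mk - j) * (N.choose u * s ^ u * (1 - s) ^ (N - u)) := fun u hu => by
    rw [Nat.cast_add, add_sub_cancel_left, intChoose_natCast, pow_add,
      show M - (j + u) = (mk - j) + (N - u) by simp at hu; omega, pow_add]
    ring
  have hone : ∑ u ∈ Finset.range (N + 1), (N.choose u : ℝ) * s ^ u * (1 - s) ^ (N - u) = 1 := by
    simpa [bernsteinPolynomial, eval_finsetSum] using
      congrArg (eval s) (bernsteinPolynomial.sum ℝ N)
  rw [Finset.sum_eq_zero hlow, Finset.sum_eq_zero hhigh, Finset.sum_congr rfl hmid,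
    ← Finset.mul_sum, hone]
  simp [bernsteinPolynomial]
  ring

lemma bern_eq_sum_elevCoeff_mul_bern (hab : a ≠ b) {mk M j : ℕ} (hkM : mk ≤ M) (hj : j ≤ mk) :
    bern mk a b j = fun x => ∑ t : Fin (M + 1), elevCoeff mk M t j * bern M a b t x := by
  funext x
  simp only [bern_eq_eval hab]
  rw [bernsteinPolynomial_eval_eq_sum_elevCoeff hkM hj, Finset.sum_range]

lemma lam_bern_of_le (hab : a ≠ b) {mk M j : ℕ} (hkM : mk ≤ M) (hj : j ≤ mk) (t : Fin (M + 1)) :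
    lam M a b t (bern mk a b j) = elevCoeff mk M t j := by
  rw [bern_eq_sum_elevCoeff_mul_bern hab hkM hj, lam_sum_bern hab]

end DualFunctionals

section QuasiInterpolant

variable {a b : ℝ} {mk ml M : ℕ}

lemma alphaF_val (hdvd : mk ∣ M) (i : Fin (mk + 1)) : (alphaF mk M i : ℕ) = i * (M / mk) := by
  refine min_eq_left ?_
  calc (i : ℕ) * (M / mk) ≤ mk * (M / mk) := Nat.mul_le_mul_right _ (Nat.lt_succ_iff.1 i.2)
    _ = M := Nat.mul_div_cancel' hdvd

lemma det_Esub_ne_zero (hab : a ≠ b) (hdvd : mk ∣ M) (hM : 0 < M) : (Esub mk M a b).det ≠ 0 := by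
  obtain ⟨q, rfl⟩ := hdvd
  have hmk : 0 < mk := Nat.pos_of_mul_pos_right hM
  have hq : 0 < q := Nat.pos_of_mul_pos_left hM
  set R : Fin (mk + 1) → ℤ := fun i => ((i * q : ℕ) : ℤ)
  have hE : Esub mk (mk * q) a b = Matrix.diagonal (fun i : Fin (mk + 1) =>
      (((mk * q).choose (i * q) : ℕ) : ℝ)⁻¹) * pascalMinor (mk * q - mk) R *
      Matrix.diagonal fun j : Fin (mk + 1) => (mk.choose j : ℝ) := by
    ext i j
    rw [Esub, Emat, lam_bern_of_le hab (Nat.le_mul_of_pos_right mk hq) (Nat.lt_succ_iff.1 j.2),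
      alphaF_val (dvd_mul_right mk q), Nat.mul_div_cancel_left q hmk, elevCoeff]
    simp only [Matrix.diagonal_mul, Matrix.mul_diagonal, pascalMinor, Matrix.of_apply, R]
    ring
  have hR : StrictMono R := fun i j hij => by
    show ((i * q : ℕ) : ℤ) < ((j * q : ℕ) : ℤ)
    exact_mod_cast Nat.mul_lt_mul_of_pos_right (Fin.lt_def.1 hij) hq
  have hdiag : ∀ i : Fin (mk + 1), ((i : ℕ) : ℤ) ≤ R i ∧ R i ≤ i + ↑(mk * q - mk) := by
    intro i
    have hi := Nat.lt_succ_iff.1 i.2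
    have h₁ : (i : ℕ) ≤ i * q := Nat.le_mul_of_pos_right _ hq
    have h₂ : (i : ℕ) * q + mk ≤ i + mk * q := by nlinarith
    have h₃ : mk ≤ mk * q := Nat.le_mul_of_pos_right _ hq
    constructor <;> simp only [R] <;> omega
  rw [hE, Matrix.det_mul, Matrix.det_mul, Matrix.det_diagonal, Matrix.det_diagonal]
  refine mul_ne_zero (mul_ne_zero (Finset.prod_ne_zero_iff.2 fun i _ => ?_)
    (zero_lt_one.trans_le (one_le_det_pascalMinor _ hR hdiag)).ne')
    (Finset.prod_ne_zero_iff.2 fun j _ => ?_)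
  · exact inv_ne_zero (Nat.cast_ne_zero.2 (Nat.choose_pos
      (Nat.mul_le_mul_right q (Nat.lt_succ_iff.1 i.2))).ne')
  · exact Nat.cast_ne_zero.2 (Nat.choose_pos (Nat.lt_succ_iff.1 j.2)).ne'

lemma Dq_eq (j : Fin (mk + 1)) :
    Dq mk M a b j = fun x => ∑ l : Fin (mk + 1), (Esub mk M a b)⁻¹ l j * bern mk a b l x := rfl

lemma Pop_eq (f : ℝ → ℝ) :
    Pop mk M a b f = fun x => ∑ i : Fin (mk + 1), mu mk M a b i f * Dq mk M a b i x := rfl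

lemma mu_Dq (hab : a ≠ b) (hdvd : mk ∣ M) (hM : 0 < M) (i j : Fin (mk + 1)) :
    mu mk M a b i (Dq mk M a b j) = (1 : Matrix (Fin (mk + 1)) (Fin (mk + 1)) ℝ) i j := by
  rw [← Matrix.mul_nonsing_inv _ (isUnit_iff_ne_zero.2 (det_Esub_ne_zero hab hdvd hM)),
    Matrix.mul_apply, mu, Dq_eq, lam_sum]
  exact Finset.sum_congr rfl fun l _ => mul_comm _ _

lemma Pop_sum {ι : Type*} (S : Finset ι) (c : ι → ℝ) (g : ι → ℝ → ℝ) :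
    Pop mk M a b (fun x => ∑ l ∈ S, c l * g l x) =
      fun x => ∑ l ∈ S, c l * Pop mk M a b (g l) x := by
  funext x
  simp only [Pop, mu, lam_sum, Finset.sum_mul, Finset.mul_sum]
  rw [Finset.sum_comm]
  exact Finset.sum_congr rfl fun l _ => Finset.sum_congr rfl fun i _ => by ring

lemma Pop_bern (hab : a ≠ b) (hdvd : mk ∣ M) (hM : 0 < M) (s : Fin (mk + 1)) :
    Pop mk M a b (bern mk a b s) = bern mk a b s := by
  funext x
  have hinv := Matrix.nonsing_inv_mul _ (isUnit_iff_ne_zero.2 (det_Esub_ne_zero hab hdvd hM))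
  calc Pop mk M a b (bern mk a b s) x
      = ∑ l : Fin (mk + 1), ((Esub mk M a b)⁻¹ * Esub mk M a b) l s * bern mk a b l x := by
        simp only [Pop, Dq, Matrix.mul_apply, Finset.mul_sum, Finset.sum_mul]
        rw [Finset.sum_comm]
        exact Finset.sum_congr rfl fun l _ => Finset.sum_congr rfl fun i _ => by
          rw [mu, ← Emat, ← Esub]
          ring
    _ = bern mk a b s x := by simp [hinv, Matrix.one_apply]

lemma Pop_bern_of_le (hab : a ≠ b) (hlk : ml ≤ mk) (hdvd : mk ∣ M) (hM : 0 < M) {s : ℕ}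
    (hs : s ≤ ml) : Pop mk M a b (bern ml a b s) = bern ml a b s := by
  rw [bern_eq_sum_elevCoeff_mul_bern hab hlk hs, Pop_sum]
  simp only [Pop_bern hab hdvd hM]

lemma Pop_Dq_of_le (hab : a ≠ b) (hlk : ml ≤ mk) (hdvd : mk ∣ M) (hM : 0 < M)
    (j : Fin (ml + 1)) : Pop mk M a b (Dq ml M a b j) = Dq ml M a b j := by
  rw [Dq_eq, Pop_sum]
  simp only [Pop_bern_of_le hab hlk hdvd hM (Nat.lt_succ_iff.1 (Fin.is_lt _))]

lemma Pop_Pop_of_le (hab : a ≠ b) (hlk : ml ≤ mk) (hdvd : mk ∣ M) (hM : 0 < M) (f : ℝ → ℝ) :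
    Pop mk M a b (Pop ml M a b f) = Pop ml M a b f := by
  rw [Pop_eq (mk := ml), Pop_sum]
  simp only [Pop_Dq_of_le hab hlk hdvd hM]

lemma mu_Pop (hab : a ≠ b) (hdvd : mk ∣ M) (hM : 0 < M) (i : Fin (mk + 1)) (f : ℝ → ℝ) :
    mu mk M a b i (Pop mk M a b f) = mu mk M a b i f := by
  calc mu mk M a b i (Pop mk M a b f)
      = ∑ j, mu mk M a b j f * mu mk M a b i (Dq mk M a b j) := by
        rw [Pop_eq]
        exact lam_sum _ _ _ _
    _ = mu mk M a b i f := by simp [mu_Dq hab hdvd hM, Matrix.one_apply]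

lemma exists_alphaF_eq (hlk : ml ∣ mk) (hdvd : mk ∣ M) (hM : 0 < M) (i : Fin (ml + 1)) :
    ∃ i' : Fin (mk + 1), alphaF ml M i = alphaF mk M i' := by
  obtain ⟨u, rfl⟩ := hlk
  obtain ⟨v, rfl⟩ := hdvd
  have hml : 0 < ml := Nat.pos_of_mul_pos_right (Nat.pos_of_mul_pos_right hM)
  have hu : 0 < u := Nat.pos_of_mul_pos_left (Nat.pos_of_mul_pos_right hM)
  refine ⟨⟨i * u, Nat.lt_succ_of_le (Nat.mul_le_mul_right u (Nat.lt_succ_iff.1 i.2))⟩, Fin.ext ?_⟩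
  rw [alphaF_val (Dvd.intro _ (mul_assoc ml u v).symm), alphaF_val (dvd_mul_right _ v),
    Nat.mul_div_cancel_left _ (Nat.mul_pos hml hu), mul_assoc ml, Nat.mul_div_cancel_left _ hml]
  exact (mul_assoc _ _ _).symm

lemma Pop_Pop_of_dvd (hab : a ≠ b) (hlk : ml ∣ mk) (hdvd : mk ∣ M) (hM : 0 < M) (f : ℝ → ℝ) :
    Pop ml M a b (Pop mk M a b f) = Pop ml M a b f := by
  funext x
  refine Finset.sum_congr rfl fun i _ => congrArg (· * _) ?_
  obtain ⟨i', hi'⟩ := exists_alphaF_eq hlk hdvd hM i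
  simp only [mu, hi']
  exact mu_Pop hab hdvd hM i' f

end QuasiInterpolant

lemma rel_of_forall_lt_rel_succ {β : Type*} (r : β → β → Prop) [Std.Refl r] [IsTrans β r]
    {f : ℕ → β} {N : ℕ} (h : ∀ k < N, r (f k) (f (k + 1))) {l k : ℕ} (hlk : l ≤ k)
    (hkN : k ≤ N) : r (f l) (f k) := by
  induction k, hlk using Nat.le_induction with
  | base => exact refl _
  | succ k hlk ih => exact _root_.trans (ih (by omega)) (h k (by omega))

lemma Pop_chain {a b : ℝ} {m : ℕ → ℕ} {r l k : ℕ} (hab : a ≠ b) (hm0 : 0 < m 0)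
    (hmi : ∀ k < r, m k < m (k + 1)) (hmd : ∀ k < r, m k ∣ m (k + 1)) (hlk : l ≤ k) (hkr : k ≤ r)
    (f : ℝ → ℝ) :
    Pop (m k) (m r) a b (Pop (m l) (m r) a b f) = Pop (m l) (m r) a b f ∧
      Pop (m l) (m r) a b (Pop (m k) (m r) a b f) = Pop (m l) (m r) a b f := by
  have hmono : ∀ {l k}, l ≤ k → k ≤ r → m l ≤ m k :=
    rel_of_forall_lt_rel_succ (· ≤ ·) fun k hk => (hmi k hk).le
  have hdvd : ∀ {l k}, l ≤ k → k ≤ r → m l ∣ m k := rel_of_forall_lt_rel_succ (· ∣ ·) hmd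
  have hr : 0 < m r := hm0.trans_le (hmono (Nat.zero_le r) le_rfl)
  exact ⟨Pop_Pop_of_le hab (hmono hlk hkr) (hdvd hkr le_rfl) hr f,
    Pop_Pop_of_dvd hab (hdvd hlk hkr) (hdvd hkr le_rfl) hr f⟩

/-- Chain relations: for `ℓ ≤ k ≤ r`,
`P_{m_k}P_{m_ℓ} = P_{m_ℓ} = P_{m_ℓ}P_{m_k}` on `C[a,b]`, and likewise for the `Q`'s. -/
theorem stmt6 (a b c d : ℝ) (hab : a < b) (hcd : c < d) (r : ℕ) (m n : ℕ → ℕ)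
    (hm0 : 0 < m 0) (hn0 : 0 < n 0)
    (hmi : ∀ k < r, m k < m (k + 1)) (hni : ∀ k < r, n k < n (k + 1))
    (hmd : ∀ k < r, m k ∣ m (k + 1)) (hnd : ∀ k < r, n k ∣ n (k + 1)) :
    ∀ l k : ℕ, l ≤ k → k ≤ r →
      (∀ f : ℝ → ℝ, ContinuousOn f (Set.Icc a b) →
        Pop (m k) (m r) a b (Pop (m l) (m r) a b f) = Pop (m l) (m r) a b f ∧
        Pop (m l) (m r) a b (Pop (m k) (m r) a b f) = Pop (m l) (m r) a b f) ∧
      (∀ g : ℝ → ℝ, ContinuousOn g (Set.Icc c d) →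
        Pop (n k) (n r) c d (Pop (n l) (n r) c d g) = Pop (n l) (n r) c d g ∧
        Pop (n l) (n r) c d (Pop (n k) (n r) c d g) = Pop (n l) (n r) c d g) := by
  intro l k hlk hkr
  exact ⟨fun f _ => Pop_chain hab.ne hm0 hmi hmd hlk hkr f,
    fun g _ => Pop_chain hcd.ne hn0 hni hnd hlk hkr g⟩
end

section
/- For each k = 0,…,r and every f ∈ C[a,b], ‖P_{m_k} f‖_{∞,[a,b]} ≤ C_{m_r,m_k}·‖f‖_{∞,[a,b]}, where C_{m_r,m_k} := C_{m_r}·(m_k+1)·‖E_{m_k}^{m_r}(α^k,:)^{−1}‖_∞, with C_{m_r} := max_{0≤i≤m_r} sup{ |λ_i^{m_r} f| : f ∈ C[a,b], ‖f‖_{∞,[a,b]} ≤ 1 }, E_{m_k}^{m_r} the degree elevation matrix with entries λ_i^{m_r}(B_j^{m_k}), E_{m_k}^{m_r}(α^k,:) its row-submatrix indexed by α^k (which is invertible), and ‖·‖_∞ the maximum absolute row sum matrix norm. The analogous bound ‖Q_{n_k} g‖_{∞,[c,d]} ≤ C_{n_r,n_k}·‖g‖_{∞,[c,d]} holds for all g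 ∈ C[c,d]. -/
open scoped BigOperators

/-!
The bound is a direct estimate of `P_{m_k} f = Σ_i (μ_i f) D_i`. Each `μ_i = λ_{α_i}` is bounded by
`C_{m_r} ‖f‖` (rescale `f` into the unit ball over which `C_{m_r}` is the supremum). Each `D_i` is
a combination of Bernstein polynomials, which take values in `[0,1]` on `[a,b]`, so `|D_i|` is at
most the `i`-th absolute column sum of `E(α,:)⁻¹`; the `m_k + 1` column sums add up to at most
`(m_k + 1)` times the maximal absolute row sum.
-/

open Finset

lemma choose_mul_pow_mul_pow_le_one {s t : ℝ} (hs : 0 ≤ s) (ht : 0 ≤ t) (hst : t + s = 1)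
    (m i : ℕ) : (m.choose i : ℝ) * s ^ (m - i) * t ^ i ≤ 1 := by
  rcases le_or_gt i m with him | him
  · have hterm : ∀ k ∈ range (m + 1), 0 ≤ t ^ k * s ^ (m - k) * (m.choose k : ℝ) :=
      fun k _ => by positivity
    have hsum : ∑ k ∈ range (m + 1), t ^ k * s ^ (m - k) * (m.choose k : ℝ) = 1 := by
      rw [← add_pow, hst, one_pow]
    calc (m.choose i : ℝ) * s ^ (m - i) * t ^ i = t ^ i * s ^ (m - i) * (m.choose i : ℝ) := by
          ring
      _ ≤ 1 := hsum ▸ single_le_sum hterm (mem_range.2 (Nat.lt_succ_of_le him))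
  · simp [Nat.choose_eq_zero_of_lt him]

lemma bern_mem_Icc {a b x : ℝ} (hab : a < b) (hx : x ∈ Set.Icc a b) (m i : ℕ) :
    bern m a b i x ∈ Set.Icc 0 1 := by
  have hba : 0 < b - a := sub_pos.2 hab
  have hs : 0 ≤ (b - x) / (b - a) := div_nonneg (by linarith [hx.2]) hba.le
  have ht : 0 ≤ (x - a) / (b - a) := div_nonneg (by linarith [hx.1]) hba.le
  have hst : (x - a) / (b - a) + (b - x) / (b - a) = 1 := by field_simp; ring
  exact ⟨by unfold bern; positivity, choose_mul_pow_mul_pow_le_one hs ht hst m i⟩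

lemma node_mem_Icc {a b : ℝ} (hab : a < b) (m : ℕ) (i : Fin (m + 1)) :
    node m a b i ∈ Set.Icc a b := by
  have hi : (i : ℝ) / m ∈ Set.Icc (0 : ℝ) 1 := by
    rcases Nat.eq_zero_or_pos m with rfl | hm
    · simp
    · exact ⟨by positivity, div_le_one_of_le₀ (by exact_mod_cast Nat.lt_succ_iff.1 i.2)
        (Nat.cast_nonneg m)⟩
  have hba : 0 < b - a := sub_pos.2 hab
  constructor <;> simp only [node] <;> nlinarith [hi.1, hi.2]

section SupNorm

variable {α : Type*} {S : Set α} {f : α → ℝ}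

lemma supN_nonneg (S : Set α) (f : α → ℝ) : 0 ≤ supN S f :=
  Real.iSup_nonneg fun _ => abs_nonneg _

lemma supN_le {C : ℝ} (hC : 0 ≤ C) (h : ∀ z ∈ S, |f z| ≤ C) : supN S f ≤ C :=
  Real.iSup_le (fun z => h z z.2) hC

lemma abs_le_supN [TopologicalSpace α] (hS : IsCompact S) (hf : ContinuousOn f S) {z : α}
    (hz : z ∈ S) : |f z| ≤ supN S f := by
  obtain ⟨C, hC⟩ := hS.exists_bound_of_continuousOn hf
  exact le_ciSup (f := fun z : S => |f z|) ⟨C, by rintro _ ⟨y, rfl⟩; exact hC y y.2⟩ ⟨z, hz⟩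

end SupNorm

lemma rowNorm_nonneg {p q : ℕ} (A : Matrix (Fin p) (Fin q) ℝ) : 0 ≤ rowNorm A :=
  Real.iSup_nonneg fun _ => sum_nonneg fun _ _ => abs_nonneg _

lemma sum_abs_le_rowNorm {p q : ℕ} (A : Matrix (Fin p) (Fin q) ℝ) (i : Fin p) :
    ∑ j, |A i j| ≤ rowNorm A :=
  le_ciSup (f := fun i => ∑ j, |A i j|) (Set.finite_range _).bddAbove i

lemma sum_sum_abs_le_mul_rowNorm {p q : ℕ} (A : Matrix (Fin p) (Fin q) ℝ) :
    ∑ j, ∑ i, |A i j| ≤ p * rowNorm A := by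
  rw [sum_comm]
  simpa using sum_le_sum fun i (_ : i ∈ univ) => sum_abs_le_rowNorm A i

section Functionals

variable {a b : ℝ} {m : ℕ}

lemma lam_eq_sum (j : Fin (m + 1)) (f : ℝ → ℝ) :
    lam m a b j f = ∑ i, (Tmat m a b)⁻¹ j i * f (node m a b i) := rfl

lemma abs_lam_le_sum (hab : a < b) (j : Fin (m + 1)) {f : ℝ → ℝ} {C : ℝ}
    (hf : ∀ x ∈ Set.Icc a b, |f x| ≤ C) :
    |lam m a b j f| ≤ (∑ i, |(Tmat m a b)⁻¹ j i|) * C := by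
  rw [lam_eq_sum, sum_mul]
  refine (abs_sum_le_sum_abs _ _).trans (sum_le_sum fun i _ => ?_)
  rw [abs_mul]
  exact mul_le_mul_of_nonneg_left (hf _ (node_mem_Icc hab m i)) (abs_nonneg _)

lemma abs_lam_le_Cbase (hab : a < b) (j : Fin (m + 1)) {f : ℝ → ℝ}
    (hf : ContinuousOn f (Set.Icc a b)) (hf1 : supN (Set.Icc a b) f ≤ 1) :
    |lam m a b j f| ≤ Cbase m a b := by
  have hbdd : BddAbove (Set.range fun g : {g : ℝ → ℝ //
      ContinuousOn g (Set.Icc a b) ∧ supN (Set.Icc a b) g ≤ 1} => |lam m a b j g.1|) := by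
    refine ⟨∑ i, |(Tmat m a b)⁻¹ j i|, ?_⟩
    rintro _ ⟨⟨g, hg, hg1⟩, rfl⟩
    simpa using abs_lam_le_sum hab j fun x hx => (abs_le_supN isCompact_Icc hg hx).trans hg1
  exact (le_ciSup hbdd ⟨f, hf, hf1⟩).trans <|
    le_ciSup (f := fun i => ⨆ g : {g : ℝ → ℝ //
      ContinuousOn g (Set.Icc a b) ∧ supN (Set.Icc a b) g ≤ 1}, |lam m a b i g.1|)
      (Set.finite_range _).bddAbove j

lemma Cbase_nonneg (m : ℕ) (a b : ℝ) : 0 ≤ Cbase m a b :=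
  Real.iSup_nonneg fun _ => Real.iSup_nonneg fun _ => abs_nonneg _

lemma lam_const_mul (j : Fin (m + 1)) (c : ℝ) (f : ℝ → ℝ) :
    lam m a b j (fun x => c * f x) = c * lam m a b j f := by
  simp only [lam_eq_sum, mul_sum]
  exact sum_congr rfl fun i _ => by ring

lemma abs_lam_le (hab : a < b) (j : Fin (m + 1)) {f : ℝ → ℝ}
    (hf : ContinuousOn f (Set.Icc a b)) :
    |lam m a b j f| ≤ Cbase m a b * supN (Set.Icc a b) f := by
  set M := supN (Set.Icc a b) f
  rcases (supN_nonneg (Set.Icc a b) f).eq_or_lt with hM | hM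
  · have hf0 : ∀ x ∈ Set.Icc a b, |f x| ≤ 0 := fun x hx => hM ▸ abs_le_supN isCompact_Icc hf hx
    have h0 : lam m a b j f = 0 := by simpa using abs_lam_le_sum hab j hf0
    rw [h0, abs_zero]
    exact mul_nonneg (Cbase_nonneg m a b) (supN_nonneg _ _)
  · have hscaled : supN (Set.Icc a b) (fun x => M⁻¹ * f x) ≤ 1 := by
      refine supN_le zero_le_one fun x hx => ?_
      rw [abs_mul, abs_of_pos (inv_pos.2 hM), inv_mul_le_iff₀ hM, mul_one]
      exact abs_le_supN isCompact_Icc hf hx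
    have h := abs_lam_le_Cbase (f := fun x => M⁻¹ * f x) hab j (continuousOn_const.mul hf)
      hscaled
    rw [lam_const_mul, abs_mul, abs_of_pos (inv_pos.2 hM), inv_mul_le_iff₀ hM] at h
    linarith

end Functionals

lemma abs_Dq_le {a b x : ℝ} (hab : a < b) (hx : x ∈ Set.Icc a b) (mk mr : ℕ)
    (i : Fin (mk + 1)) : |Dq mk mr a b i x| ≤ ∑ l, |(Esub mk mr a b)⁻¹ l i| := by
  refine (abs_sum_le_sum_abs _ _).trans (sum_le_sum fun l _ => ?_)
  have hB := bern_mem_Icc hab hx mk l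
  rw [abs_mul, abs_of_nonneg hB.1]
  exact mul_le_of_le_one_right (abs_nonneg _) hB.2

lemma supN_Pop_le {a b : ℝ} (hab : a < b) (mk mr : ℕ) {f : ℝ → ℝ}
    (hf : ContinuousOn f (Set.Icc a b)) :
    supN (Set.Icc a b) (Pop mk mr a b f) ≤ Cconst mk mr a b * supN (Set.Icc a b) f := by
  set M := supN (Set.Icc a b) f
  set Einv := (Esub mk mr a b)⁻¹
  have hCM : 0 ≤ Cbase mr a b * M := mul_nonneg (Cbase_nonneg mr a b) (supN_nonneg _ _)
  have hC : Cconst mk mr a b * M = Cbase mr a b * M * (((mk : ℝ) + 1) * rowNorm Einv) := by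
    rw [show Cconst mk mr a b = Cbase mr a b * ((mk : ℝ) + 1) * rowNorm Einv from rfl]; ring
  have hcols : ∑ i, ∑ l, |Einv l i| ≤ ((mk : ℝ) + 1) * rowNorm Einv := by
    simpa using sum_sum_abs_le_mul_rowNorm Einv
  refine supN_le ?_ fun x hx => ?_
  · rw [hC]; exact mul_nonneg hCM (mul_nonneg (by positivity) (rowNorm_nonneg Einv))
  calc |Pop mk mr a b f x| ≤ ∑ i, Cbase mr a b * M * ∑ l, |Einv l i| := by
        refine (abs_sum_le_sum_abs _ _).trans (sum_le_sum fun i _ => ?_)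
        rw [abs_mul]
        exact mul_le_mul (abs_lam_le hab _ hf) (abs_Dq_le hab hx mk mr i) (abs_nonneg _) hCM
    _ ≤ Cbase mr a b * M * (((mk : ℝ) + 1) * rowNorm Einv) := by
        rw [← mul_sum]; exact mul_le_mul_of_nonneg_left hcols hCM
    _ = Cconst mk mr a b * M := hC.symm

theorem stmt7_general (a b c d : ℝ) (hab : a < b) (hcd : c < d) (r : ℕ) (m n : ℕ → ℕ) :
    ∀ k ≤ r,
      (∀ f : ℝ → ℝ, ContinuousOn f (Set.Icc a b) →
        supN (Set.Icc a b) (Pop (m k) (m r) a b f) ≤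
          Cconst (m k) (m r) a b * supN (Set.Icc a b) f) ∧
      (∀ g : ℝ → ℝ, ContinuousOn g (Set.Icc c d) →
        supN (Set.Icc c d) (Pop (n k) (n r) c d g) ≤
          Cconst (n k) (n r) c d * supN (Set.Icc c d) g) :=
  fun k _ =>
    ⟨fun _ hf => supN_Pop_le hab (m k) (m r) hf, fun _ hg => supN_Pop_le hcd (n k) (n r) hg⟩

/-- Stability bounds: `‖P_{m_k} f‖_{∞,[a,b]} ≤ C_{m_r,m_k}·‖f‖_{∞,[a,b]}`
with `C_{m_r,m_k} = C_{m_r}·(m_k+1)·‖E_{m_k}^{m_r}(α^k,:)⁻¹‖_∞`, and likewise for `Q_{n_k}`. -/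
theorem stmt7 (a b c d : ℝ) (hab : a < b) (hcd : c < d) (r : ℕ) (m n : ℕ → ℕ)
    (hm0 : 0 < m 0) (hn0 : 0 < n 0)
    (hmi : ∀ k < r, m k < m (k + 1)) (hni : ∀ k < r, n k < n (k + 1))
    (hmd : ∀ k < r, m k ∣ m (k + 1)) (hnd : ∀ k < r, n k ∣ n (k + 1)) :
    ∀ k ≤ r,
      (∀ f : ℝ → ℝ, ContinuousOn f (Set.Icc a b) →
        supN (Set.Icc a b) (Pop (m k) (m r) a b f) ≤
          Cconst (m k) (m r) a b * supN (Set.Icc a b) f) ∧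
      (∀ g : ℝ → ℝ, ContinuousOn g (Set.Icc c d) →
        supN (Set.Icc c d) (Pop (n k) (n r) c d g) ≤
          Cconst (n k) (n r) c d * supN (Set.Icc c d) g) :=
  stmt7_general a b c d hab hcd r m n
end
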